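/- Let μ be a probability measure on ℝ^d with ∫ ‖x‖² dμ(x) < ∞, let φ : ℝ^d → ℝ be a convex differentiable function whose gradient T = ∇φ is measurable and satisfies ∫ ‖T(x)‖² dμ(x) < ∞. For a_1, b_1, a_2, b_2 ≥ 0 define S_1(x) := a_1 x + b_1 T(x) and S_2(x) := a_2 x + b_2 T(x). Then the infimum of ∫ ‖x − y‖² dγ(x,y) over all couplings γ of the pushforward measures (S_1)_#μ and (S_2)_#μ equals ∫ ‖S_1(x) − S_2(x)‖² dμ(x), i.e., equals ∫ ‖(a_1 − a_2)x + (b_1 − b_2)T(x)‖² dμ(x), and this infimum is attained by the coupling (S_1, S_2)_#μ. -/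

import Mathlib

/-!
Write `T = ∇φ`. In `⟪S₁ x, S₂ y⟫` the terms `⟪x, y⟫` and `⟪T x, T y⟫` are bounded by
`2⟪u, v⟫ ≤ ‖u‖² + ‖v‖²`, and `⟪x, T y⟫`, `⟪T x, y⟫` by the Fenchel–Young inequality for `φ`, whose
Legendre transform at `T v` is `⟪v, T v⟫ - φ v`. As all coefficients are nonnegative, this gives
`F`, `G` with `⟪S₁ x, S₂ y⟫ ≤ F x + G y` and equality for `x = y`. The function
`f u = sup_y (⟪u, S₂ y⟫ - G y)` and its Legendre transform `g` satisfy `⟪u, v⟫ ≤ f u + g v`,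
`f ∘ S₁ = F` and `g ∘ S₂ = G`. Integrating `‖u - v‖² ≥ (‖u‖² - 2 f u) + (‖v‖² - 2 g v)` against
any coupling bounds its cost below by `∫ ‖S₁ - S₂‖² dμ`, the cost of `(S₁, S₂)_# μ`.
-/

open MeasureTheory Set
open scoped ENNReal InnerProductSpace RealInnerProductSpace

theorem ConvexOn.add_fderiv_sub_le {E : Type*} [NormedAddCommGroup E] [NormedSpace ℝ E]
    {f : E → ℝ} {f' : E →L[ℝ] ℝ} {x : E} (hf : ConvexOn ℝ univ f) (hx : HasFDerivAt f f' x)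
    (y : E) : f x + f' (y - x) ≤ f y := by
  have hline : ConvexOn ℝ univ (f ∘ AffineMap.lineMap (k := ℝ) x y) := by
    simpa using hf.comp_affineMap (AffineMap.lineMap x y)
  have hderiv : HasDerivAt (f ∘ AffineMap.lineMap (k := ℝ) x y) (f' (y - x)) 0 :=
    HasFDerivAt.comp_hasDerivAt _ (by simpa using hx) AffineMap.hasDerivAt_lineMap
  have := hline.le_slope_of_hasDerivAt (mem_univ 0) (mem_univ 1) one_pos hderiv
  simpa [slope_def_field, map_sub, le_sub_iff_add_le'] using this

theorem ConvexOn.add_inner_gradient_sub_le {E : Type*} [NormedAddCommGroup E]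
    [InnerProductSpace ℝ E] [CompleteSpace E] {f : E → ℝ} (hf : ConvexOn ℝ univ f)
    (hdiff : Differentiable ℝ f) (x y : E) : f x + ⟪gradient f x, y - x⟫ ≤ f y :=
  hf.add_fderiv_sub_le (hasGradientAt_iff_hasFDerivAt.mp (hdiff x).hasGradientAt) y

namespace MeasureTheory

variable {α : Type*} [MeasurableSpace α] {μ : Measure α}

theorem memLp_two_of_lintegral_ofReal_norm_sq_lt_top {F : Type*} [NormedAddCommGroup F]
    {f : α → F} (hf : AEStronglyMeasurable f μ) (h : ∫⁻ x, ENNReal.ofReal (‖f x‖ ^ 2) ∂μ < ∞) :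
    MemLp f 2 μ :=
  (memLp_two_iff_integrable_sq_norm hf).mpr
    ⟨hf.norm.pow 2, (hasFiniteIntegral_iff_ofReal (ae_of_all _ fun _ => sq_nonneg _)).mpr h⟩

theorem MemLp.integrable_norm_sq {F : Type*} [NormedAddCommGroup F] {f : α → F}
    (hf : MemLp f 2 μ) : Integrable (fun x => ‖f x‖ ^ 2) μ :=
  (memLp_two_iff_integrable_sq_norm hf.1).mp hf

theorem MemLp.integrable_inner {E : Type*} [NormedAddCommGroup E] [InnerProductSpace ℝ E]
    {f g : α → E} (hf : MemLp f 2 μ) (hg : MemLp g 2 μ) : Integrable (fun x => ⟪f x, g x⟫) μ :=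
  (L2.integrable_inner (𝕜 := ℝ) (hf.toLp f) (hg.toLp g)).congr <| by
    filter_upwards [hf.coeFn_toLp, hg.coeFn_toLp] with x hfx hgx
    rw [hfx, hgx]

theorem ae_of_map_eq_map {β X : Type*} [MeasurableSpace β] [MeasurableSpace X] {ν : Measure X}
    {f : α → β} {g : X → β} (hf : AEMeasurable f μ) (hg : Measurable g) (hfg : μ.map f = ν.map g)
    {P : β → Prop} (hP : MeasurableSet {b | P b}) (h : ∀ x, P (g x)) : ∀ᵐ a ∂μ, P (f a) :=
  ae_of_ae_map hf (by rw [hfg, ae_map_iff hg.aemeasurable hP]; exact ae_of_all _ h)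

theorem ofReal_integral_add_integral_le_lintegral {β : Type*} [MeasurableSpace β]
    {γ : Measure (α × β)} {h : α → ℝ} {k : β → ℝ} (hh : Integrable h (γ.map Prod.fst))
    (hk : Integrable k (γ.map Prod.snd)) {c : α × β → ℝ} (hc : AEStronglyMeasurable c γ)
    (hc0 : 0 ≤ c) (hle : ∀ᵐ p ∂γ, h p.1 + k p.2 ≤ c p) :
    ENNReal.ofReal (∫ u, h u ∂γ.map Prod.fst + ∫ v, k v ∂γ.map Prod.snd)
      ≤ ∫⁻ p, ENNReal.ofReal (c p) ∂γ := by
  by_cases hfin : ∫⁻ p, ENNReal.ofReal (c p) ∂γ = ∞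
  · simp [hfin]
  have hci : Integrable c γ :=
    ⟨hc, (hasFiniteIntegral_iff_ofReal (ae_of_all _ hc0)).mpr (lt_top_iff_ne_top.mpr hfin)⟩
  have hh' : Integrable (fun p => h p.1) γ := hh.comp_measurable measurable_fst
  have hk' : Integrable (fun p => k p.2) γ := hk.comp_measurable measurable_snd
  rw [← ofReal_integral_eq_lintegral_ofReal hci (ae_of_all _ hc0),
    integral_map measurable_fst.aemeasurable hh.1, integral_map measurable_snd.aemeasurable hk.1,
    ← integral_add hh' hk']
  exact ENNReal.ofReal_le_ofReal (integral_mono_ae (hh'.add hk') hci hle)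

theorem lintegral_norm_sub_sq_map_prodMk {E : Type*} [NormedAddCommGroup E] [MeasurableSpace E]
    [BorelSpace E] [SecondCountableTopology E] {S₁ S₂ : α → E} (hS₁ : Measurable S₁)
    (hS₂ : Measurable S₂) :
    ∫⁻ p, ENNReal.ofReal (‖p.1 - p.2‖ ^ 2) ∂(μ.map fun x => (S₁ x, S₂ x))
      = ∫⁻ x, ENNReal.ofReal (‖S₁ x - S₂ x‖ ^ 2) ∂μ :=
  lintegral_map (by fun_prop) (hS₁.prodMk hS₂)

end MeasureTheory

section Transforms

variable {X E : Type*} [NormedAddCommGroup E] [InnerProductSpace ℝ E]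

noncomputable def innerTransform (S : X → E) (G : X → ℝ) (u : E) : EReal :=
  ⨆ y, ((⟪u, S y⟫ - G y : ℝ) : EReal)

noncomputable def fenchelConj (f : E → EReal) (v : E) : EReal :=
  ⨆ u, (⟪u, v⟫ : EReal) - f u

theorem inner_sub_le_fenchelConj (f : E → EReal) (u v : E) :
    (⟪u, v⟫ : EReal) - f u ≤ fenchelConj f v :=
  le_iSup (fun u => (⟪u, v⟫ : EReal) - f u) u

theorem inner_le_add_of_fenchelConj_eq {f : E → EReal} {u v : E} {r s : ℝ} (hu : f u = r)
    (hv : fenchelConj f v = s) : ⟪u, v⟫ ≤ r + s := by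
  have := inner_sub_le_fenchelConj f u v
  rw [hu, hv, ← EReal.coe_sub, EReal.coe_le_coe_iff] at this
  linarith

theorem lowerSemicontinuous_innerTransform (S : X → E) (G : X → ℝ) :
    LowerSemicontinuous (innerTransform S G) :=
  lowerSemicontinuous_iSup fun _ => (continuous_coe_real_ereal.comp
    ((continuous_id.inner continuous_const).sub continuous_const)).lowerSemicontinuous

theorem lowerSemicontinuous_fenchelConj (f : E → EReal) :
    LowerSemicontinuous (fenchelConj f) := by
  refine lowerSemicontinuous_iSup fun u => Continuous.lowerSemicontinuous ?_
  simp_rw [sub_eq_add_neg]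
  refine continuous_iff_continuousAt.mpr fun v => ?_
  exact (EReal.continuousAt_add (Or.inl (EReal.coe_ne_top _)) (Or.inl (EReal.coe_ne_bot _))).comp
    ((continuous_coe_real_ereal.comp (continuous_const.inner continuous_id)).prodMk
      continuous_const).continuousAt

end Transforms

structure IsDualCertificate {X E : Type*} [NormedAddCommGroup E] [InnerProductSpace ℝ E]
    (S₁ S₂ : X → E) (F G : X → ℝ) : Prop where
  add_eq_inner : ∀ x, F x + G x = ⟪S₁ x, S₂ x⟫
  inner_le_add : ∀ x y, ⟪S₁ x, S₂ y⟫ ≤ F x + G y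

namespace IsDualCertificate

variable {X E : Type*} [NormedAddCommGroup E] [InnerProductSpace ℝ E]
  {S₁ S₂ : X → E} {F G : X → ℝ}

theorem innerTransform_eq (h : IsDualCertificate S₁ S₂ F G) (x : X) :
    innerTransform S₂ G (S₁ x) = F x := by
  refine le_antisymm (iSup_le fun y => EReal.coe_le_coe_iff.mpr ?_) ?_
  · linarith [h.inner_le_add x y]
  · refine le_trans (EReal.coe_le_coe_iff.mpr ?_)
      (le_iSup (fun y => ((⟪S₁ x, S₂ y⟫ - G y : ℝ) : EReal)) x)
    linarith [h.add_eq_inner x]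

theorem fenchelConj_innerTransform_eq (h : IsDualCertificate S₁ S₂ F G) (x : X) :
    fenchelConj (innerTransform S₂ G) (S₂ x) = G x := by
  refine le_antisymm (iSup_le fun u => ?_) ?_
  · calc (⟪u, S₂ x⟫ : EReal) - innerTransform S₂ G u
        ≤ (⟪u, S₂ x⟫ : EReal) - ((⟪u, S₂ x⟫ - G x : ℝ) : EReal) :=
          EReal.sub_le_sub le_rfl (le_iSup (fun y => ((⟪u, S₂ y⟫ - G y : ℝ) : EReal)) x)
      _ = G x := by rw [← EReal.coe_sub]; norm_cast; ring
  · convert inner_sub_le_fenchelConj (innerTransform S₂ G) (S₁ x) (S₂ x) using 1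
    rw [h.innerTransform_eq, ← EReal.coe_sub, EReal.coe_eq_coe_iff]
    linarith [h.add_eq_inner x]

variable [MeasurableSpace X] [MeasurableSpace E] [BorelSpace E] {μ : Measure X}

theorem ae_inner_le_toReal_add_toReal (h : IsDualCertificate S₁ S₂ F G) (hS₁ : Measurable S₁)
    (hS₂ : Measurable S₂) {γ : Measure (E × E)} (hγ₁ : γ.map Prod.fst = μ.map S₁)
    (hγ₂ : γ.map Prod.snd = μ.map S₂) :
    ∀ᵐ p ∂γ, ⟪p.1, p.2⟫ ≤ (innerTransform S₂ G p.1).toReal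
      + (fenchelConj (innerTransform S₂ G) p.2).toReal := by
  set f := innerTransform S₂ G
  set g := fenchelConj f
  have hf : Measurable f := (lowerSemicontinuous_innerTransform S₂ G).measurable
  have hg : Measurable g := (lowerSemicontinuous_fenchelConj f).measurable
  -- `f` and `g` are finite on the ranges of `S₁` and `S₂`, hence almost surely under `γ`.
  have hf_fin : ∀ᵐ p ∂γ, f p.1 = ((f p.1).toReal : EReal) :=
    ae_of_map_eq_map measurable_fst.aemeasurable hS₁ hγ₁
      (measurableSet_eq_fun hf (continuous_coe_real_ereal.measurable.comp hf.ereal_toReal))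
      fun x => by simp [f, h.innerTransform_eq]
  have hg_fin : ∀ᵐ p ∂γ, g p.2 = ((g p.2).toReal : EReal) :=
    ae_of_map_eq_map measurable_snd.aemeasurable hS₂ hγ₂
      (measurableSet_eq_fun hg (continuous_coe_real_ereal.measurable.comp hg.ereal_toReal))
      fun x => by simp [g, f, h.fenchelConj_innerTransform_eq]
  filter_upwards [hf_fin, hg_fin] with p hp₁ hp₂
  exact inner_le_add_of_fenchelConj_eq hp₁ hp₂

theorem lintegral_norm_sub_sq_le [SecondCountableTopology E] (h : IsDualCertificate S₁ S₂ F G)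
    (hS₁ : Measurable S₁) (hS₂ : Measurable S₂) (h₁ : MemLp S₁ 2 μ) (h₂ : MemLp S₂ 2 μ)
    (hF : Integrable F μ) (hG : Integrable G μ) {γ : Measure (E × E)}
    (hγ₁ : γ.map Prod.fst = μ.map S₁) (hγ₂ : γ.map Prod.snd = μ.map S₂) :
    ∫⁻ x, ENNReal.ofReal (‖S₁ x - S₂ x‖ ^ 2) ∂μ ≤ ∫⁻ p, ENNReal.ofReal (‖p.1 - p.2‖ ^ 2) ∂γ := by
  set f := innerTransform S₂ G
  set g := fenchelConj f
  have hf : Measurable f := (lowerSemicontinuous_innerTransform S₂ G).measurable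
  have hg : Measurable g := (lowerSemicontinuous_fenchelConj f).measurable
  set ψ₁ : E → ℝ := fun u => ‖u‖ ^ 2 - 2 * (f u).toReal
  set ψ₂ : E → ℝ := fun v => ‖v‖ ^ 2 - 2 * (g v).toReal
  have ψ₁_comp (x : X) : ψ₁ (S₁ x) = ‖S₁ x‖ ^ 2 - 2 * F x := by
    simp [ψ₁, f, h.innerTransform_eq]
  have ψ₂_comp (x : X) : ψ₂ (S₂ x) = ‖S₂ x‖ ^ 2 - 2 * G x := by
    simp [ψ₂, g, f, h.fenchelConj_innerTransform_eq]
  have hI₁ : Integrable ψ₁ (μ.map S₁) := by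
    refine (integrable_map_measure (by fun_prop) hS₁.aemeasurable).mpr ?_
    exact (h₁.integrable_norm_sq.sub (hF.const_mul 2)).congr
      (ae_of_all _ fun x => (ψ₁_comp x).symm)
  have hI₂ : Integrable ψ₂ (μ.map S₂) := by
    refine (integrable_map_measure (by fun_prop) hS₂.aemeasurable).mpr ?_
    exact (h₂.integrable_norm_sq.sub (hG.const_mul 2)).congr
      (ae_of_all _ fun x => (ψ₂_comp x).symm)
  have hle : ∀ᵐ p ∂γ, ψ₁ p.1 + ψ₂ p.2 ≤ ‖p.1 - p.2‖ ^ 2 := by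
    filter_upwards [h.ae_inner_le_toReal_add_toReal hS₁ hS₂ hγ₁ hγ₂] with p hp
    simp only [ψ₁, ψ₂, norm_sub_sq_real]
    linarith
  have hsplit : ∫ u, ψ₁ u ∂μ.map S₁ + ∫ v, ψ₂ v ∂μ.map S₂ = ∫ x, ‖S₁ x - S₂ x‖ ^ 2 ∂μ := by
    rw [integral_map hS₁.aemeasurable hI₁.1, integral_map hS₂.aemeasurable hI₂.1,
      ← integral_add (f := fun x => ψ₁ (S₁ x)) (g := fun x => ψ₂ (S₂ x))
        (hI₁.comp_measurable hS₁) (hI₂.comp_measurable hS₂)]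
    refine integral_congr_ae (ae_of_all _ fun x => ?_)
    simp only [ψ₁_comp, ψ₂_comp, norm_sub_sq_real, ← h.add_eq_inner x]
    ring
  have hW : Integrable (fun x => ‖S₁ x - S₂ x‖ ^ 2) μ := (h₁.sub h₂).integrable_norm_sq
  rw [← ofReal_integral_eq_lintegral_ofReal hW (ae_of_all _ fun _ => sq_nonneg _), ← hsplit,
    ← hγ₁, ← hγ₂]
  exact ofReal_integral_add_integral_le_lintegral (hγ₁ ▸ hI₁) (hγ₂ ▸ hI₂) (by fun_prop)
    (fun _ => sq_nonneg _) hle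

theorem sInf_couplingCost_eq [SecondCountableTopology E] [IsProbabilityMeasure μ]
    (h : IsDualCertificate S₁ S₂ F G) (hS₁ : Measurable S₁) (hS₂ : Measurable S₂)
    (h₁ : MemLp S₁ 2 μ) (h₂ : MemLp S₂ 2 μ) (hF : Integrable F μ) (hG : Integrable G μ) :
    sInf {c : ℝ≥0∞ | ∃ γ : Measure (E × E), IsProbabilityMeasure γ ∧
        γ.map Prod.fst = μ.map S₁ ∧ γ.map Prod.snd = μ.map S₂ ∧
        c = ∫⁻ p, ENNReal.ofReal (‖p.1 - p.2‖ ^ 2) ∂γ}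
      = ∫⁻ x, ENNReal.ofReal (‖S₁ x - S₂ x‖ ^ 2) ∂μ := by
  refine le_antisymm (sInf_le ⟨μ.map fun x => (S₁ x, S₂ x),
    Measure.isProbabilityMeasure_map (hS₁.prodMk hS₂).aemeasurable, Measure.fst_map_prodMk hS₂,
    Measure.snd_map_prodMk hS₁, (lintegral_norm_sub_sq_map_prodMk hS₁ hS₂).symm⟩) (le_sInf ?_)
  rintro _ ⟨γ, -, hγ₁, hγ₂, rfl⟩
  exact h.lintegral_norm_sub_sq_le hS₁ hS₂ h₁ h₂ hF hG hγ₁ hγ₂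

end IsDualCertificate

theorem real_inner_smul_add_smul {E : Type*} [NormedAddCommGroup E] [InnerProductSpace ℝ E]
    (a₁ b₁ a₂ b₂ : ℝ) (x u y v : E) :
    ⟪a₁ • x + b₁ • u, a₂ • y + b₂ • v⟫
      = a₁ * a₂ * ⟪x, y⟫ + a₁ * b₂ * ⟪x, v⟫ + a₂ * b₁ * ⟪u, y⟫ + b₁ * b₂ * ⟪u, v⟫ := by
  simp only [inner_add_left, inner_add_right, real_inner_smul_left, real_inner_smul_right]
  ring

section FillingCone

variable {E : Type*} [NormedAddCommGroup E] [InnerProductSpace ℝ E] [CompleteSpace E]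
  {φ : E → ℝ}

noncomputable def conePotential (φ : E → ℝ) (a₁ b₁ a₂ b₂ : ℝ) (x : E) : ℝ :=
  a₁ * a₂ / 2 * ‖x‖ ^ 2 + a₁ * b₂ * φ x + a₂ * b₁ * (⟪x, gradient φ x⟫ - φ x)
    + b₁ * b₂ / 2 * ‖gradient φ x‖ ^ 2

theorem isDualCertificate_conePotential (hconv : ConvexOn ℝ univ φ) (hdiff : Differentiable ℝ φ)
    {a₁ b₁ a₂ b₂ : ℝ} (ha₁ : 0 ≤ a₁) (hb₁ : 0 ≤ b₁) (ha₂ : 0 ≤ a₂) (hb₂ : 0 ≤ b₂) :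
    IsDualCertificate (fun x => a₁ • x + b₁ • gradient φ x) (fun x => a₂ • x + b₂ • gradient φ x)
      (conePotential φ a₁ b₁ a₂ b₂) (conePotential φ a₂ b₂ a₁ b₁) where
  add_eq_inner x := by
    rw [real_inner_smul_add_smul, real_inner_self_eq_norm_sq, real_inner_self_eq_norm_sq,
      real_inner_comm x]
    simp only [conePotential]
    ring
  inner_le_add x y := by
    set T := gradient φ
    have hxy : ⟪x, y⟫ ≤ ‖x‖ ^ 2 / 2 + ‖y‖ ^ 2 / 2 := by
      linarith [norm_sub_sq_real x y, sq_nonneg ‖x - y‖]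
    have hTT : ⟪T x, T y⟫ ≤ ‖T x‖ ^ 2 / 2 + ‖T y‖ ^ 2 / 2 := by
      linarith [norm_sub_sq_real (T x) (T y), sq_nonneg ‖T x - T y‖]
    have hxT : ⟪x, T y⟫ ≤ φ x + (⟪y, T y⟫ - φ y) := by
      have := hconv.add_inner_gradient_sub_le hdiff y x
      rw [inner_sub_right, real_inner_comm x, real_inner_comm y] at this
      linarith
    have hTy : ⟪T x, y⟫ ≤ φ y + (⟪x, T x⟫ - φ x) := by
      have := hconv.add_inner_gradient_sub_le hdiff x y
      rw [inner_sub_right, real_inner_comm x] at this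
      linarith
    rw [real_inner_smul_add_smul]
    simp only [conePotential]
    linarith [mul_le_mul_of_nonneg_left hxy (mul_nonneg ha₁ ha₂),
      mul_le_mul_of_nonneg_left hTT (mul_nonneg hb₁ hb₂),
      mul_le_mul_of_nonneg_left hxT (mul_nonneg ha₁ hb₂),
      mul_le_mul_of_nonneg_left hTy (mul_nonneg ha₂ hb₁)]

variable [MeasurableSpace E] [BorelSpace E] {μ : Measure E}

theorem ConvexOn.integrable_of_memLp_gradient [IsFiniteMeasure μ] (hconv : ConvexOn ℝ univ φ)
    (hdiff : Differentiable ℝ φ) (hx : MemLp id 2 μ) (hT : MemLp (gradient φ) 2 μ) :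
    Integrable φ μ := by
  have hbound : ∀ x, |φ x| ≤ |φ 0| + |⟪gradient φ 0, x⟫| + |⟪x, gradient φ x⟫| := fun x => by
    have hlow := hconv.add_inner_gradient_sub_le hdiff 0 x
    have hup := hconv.add_inner_gradient_sub_le hdiff x 0
    rw [sub_zero] at hlow
    rw [zero_sub, inner_neg_right, real_inner_comm] at hup
    rw [abs_le]
    constructor <;> linarith [neg_abs_le (φ 0), le_abs_self (φ 0), neg_abs_le ⟪gradient φ 0, x⟫,
      le_abs_self ⟪x, gradient φ x⟫, abs_nonneg ⟪gradient φ 0, x⟫, abs_nonneg ⟪x, gradient φ x⟫]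
  have hdom : Integrable (fun x => |φ 0| + |⟪gradient φ 0, x⟫| + |⟪x, gradient φ x⟫|) μ :=
    ((integrable_const _).add ((hx.integrable one_le_two).const_inner _).abs).add
      (hx.integrable_inner hT).abs
  exact hdom.mono' hdiff.continuous.aestronglyMeasurable (ae_of_all _ hbound)

theorem integrable_conePotential [IsFiniteMeasure μ] (hconv : ConvexOn ℝ univ φ)
    (hdiff : Differentiable ℝ φ) (hx : MemLp id 2 μ) (hT : MemLp (gradient φ) 2 μ)
    (a₁ b₁ a₂ b₂ : ℝ) : Integrable (conePotential φ a₁ b₁ a₂ b₂) μ := by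
  have hφ := hconv.integrable_of_memLp_gradient hdiff hx hT
  exact (((hx.integrable_norm_sq.const_mul _).add (hφ.const_mul _)).add
    (((hx.integrable_inner hT).sub hφ).const_mul _)).add (hT.integrable_norm_sq.const_mul _)

end FillingCone

theorem nearest_coupling_on_filling_cone
    (d : ℕ) (μ : Measure (EuclideanSpace ℝ (Fin d))) [IsProbabilityMeasure μ]
    (hμ2 : ∫⁻ x, ENNReal.ofReal (‖x‖ ^ 2) ∂μ < ⊤)
    (φ : EuclideanSpace ℝ (Fin d) → ℝ)
    (hconv : ConvexOn ℝ Set.univ φ) (hdiff : Differentiable ℝ φ)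
    (hTmeas : Measurable fun x => gradient φ x)
    (hT2 : ∫⁻ x, ENNReal.ofReal (‖gradient φ x‖ ^ 2) ∂μ < ⊤)
    (a₁ b₁ a₂ b₂ : ℝ) (ha₁ : 0 ≤ a₁) (hb₁ : 0 ≤ b₁) (ha₂ : 0 ≤ a₂) (hb₂ : 0 ≤ b₂)
    (S₁ S₂ : EuclideanSpace ℝ (Fin d) → EuclideanSpace ℝ (Fin d))
    (hS₁ : ∀ x, S₁ x = a₁ • x + b₁ • gradient φ x)
    (hS₂ : ∀ x, S₂ x = a₂ • x + b₂ • gradient φ x) :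
    sInf {c : ℝ≥0∞ |
        ∃ γ : Measure (EuclideanSpace ℝ (Fin d) × EuclideanSpace ℝ (Fin d)),
          IsProbabilityMeasure γ ∧ γ.map Prod.fst = μ.map S₁ ∧
          γ.map Prod.snd = μ.map S₂ ∧
          c = ∫⁻ p, ENNReal.ofReal (‖p.1 - p.2‖ ^ 2) ∂γ}
      = ∫⁻ x, ENNReal.ofReal (‖S₁ x - S₂ x‖ ^ 2) ∂μ
    ∧ (∫⁻ x, ENNReal.ofReal (‖S₁ x - S₂ x‖ ^ 2) ∂μ
        = ∫⁻ x, ENNReal.ofReal (‖(a₁ - a₂) • x + (b₁ - b₂) • gradient φ x‖ ^ 2) ∂μ)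
    ∧ ((μ.map fun x => (S₁ x, S₂ x)).map Prod.fst = μ.map S₁)
    ∧ ((μ.map fun x => (S₁ x, S₂ x)).map Prod.snd = μ.map S₂)
    ∧ (∫⁻ p, ENNReal.ofReal (‖p.1 - p.2‖ ^ 2) ∂(μ.map fun x => (S₁ x, S₂ x))
        = ∫⁻ x, ENNReal.ofReal (‖S₁ x - S₂ x‖ ^ 2) ∂μ) := by
  obtain rfl : S₁ = fun x => a₁ • x + b₁ • gradient φ x := funext hS₁
  obtain rfl : S₂ = fun x => a₂ • x + b₂ • gradient φ x := funext hS₂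
  have hx : MemLp id 2 μ :=
    memLp_two_of_lintegral_ofReal_norm_sq_lt_top aestronglyMeasurable_id hμ2
  have hT : MemLp (gradient φ) 2 μ :=
    memLp_two_of_lintegral_ofReal_norm_sq_lt_top hTmeas.aestronglyMeasurable hT2
  have hS₁m : Measurable fun x => a₁ • x + b₁ • gradient φ x := by fun_prop
  have hS₂m : Measurable fun x => a₂ • x + b₂ • gradient φ x := by fun_prop
  have hcert := isDualCertificate_conePotential hconv hdiff ha₁ hb₁ ha₂ hb₂
  have hF := integrable_conePotential hconv hdiff hx hT a₁ b₁ a₂ b₂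
  have hG := integrable_conePotential hconv hdiff hx hT a₂ b₂ a₁ b₁
  refine ⟨hcert.sInf_couplingCost_eq hS₁m hS₂m ((hx.const_smul a₁).add (hT.const_smul b₁))
      ((hx.const_smul a₂).add (hT.const_smul b₂)) hF hG,
    lintegral_congr fun x => ?_, Measure.fst_map_prodMk hS₂m, Measure.snd_map_prodMk hS₁m,
    lintegral_norm_sub_sq_map_prodMk hS₁m hS₂m⟩
  congr 3
  module
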